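/- Let f be the exponential generating function of the Catalan numbers. Then f(t)·8·√(π t^3)·e^{−4t} tends to 1 as t → +∞; that is, f(t) is asymptotic to e^{4t}/(8√(π t^3)) as t → +∞. -/

import Mathlib

open scoped Nat

/-- The exponential generating function of the Catalan numbers. -/
noncomputable def catalanEGF (t : ℝ) : ℝ := ∑' n : ℕ, (catalan n : ℝ) * t ^ n / n !

/-!
The Catalan numbers are the moments of the Marchenko–Pastur law:
`∫₀⁴ xⁿ √(x (4 - x)) / x dx = 2π cₙ`, since integrating by parts gives the same recursion
`(n + 2) c_{n+1} = (4n + 2) cₙ`. Summing the exponential series under the integral and reflecting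
`x = 4 - u`,
`2π f(t) = ∫₀⁴ e^{tx} √(x (4 - x)) / x dx = e^{4t} ∫₀⁴ e^{-tu} √u / √(4 - u) du`,
and by Laplace's method at `u = 0` (Watson's lemma) the last integral is
`~ Γ(3/2) / 2 · t^{-3/2} = √π / 4 · t^{-3/2}`.
-/

open Real MeasureTheory Set Filter Topology

lemma rpow_mul_integral_exp_neg_mul_rpow_mul_eq {α b t : ℝ} (g : ℝ → ℝ) (hb : 0 ≤ b)
    (ht : 0 < t) :
    t ^ α * ∫ u in (0 : ℝ)..b, exp (-(t * u)) * (u ^ (α - 1) * g u)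
      = ∫ s in (0 : ℝ)..t * b, exp (-s) * s ^ (α - 1) * g (s / t) := by
  have hsub := intervalIntegral.integral_comp_mul_left
    (fun s => exp (-s) * s ^ (α - 1) * g (s / t)) (a := 0) (b := b) ht.ne'
  rw [mul_zero, smul_eq_mul, eq_inv_mul_iff_mul_eq₀ ht.ne'] at hsub
  rw [← hsub, ← intervalIntegral.integral_const_mul, ← intervalIntegral.integral_const_mul]
  refine intervalIntegral.integral_congr fun u hu => ?_
  rw [uIcc_of_le hb] at hu
  simp only [mul_rpow ht.le hu.1, mul_div_cancel_left₀ u ht.ne', rpow_sub_one ht.ne']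
  field_simp

lemma tendsto_rpow_mul_integral_exp_neg_mul_rpow_mul {α b C L : ℝ} {g : ℝ → ℝ} (hα : 0 < α)
    (hb : 0 < b) (hg : Measurable g) (hgC : ∀ u ∈ Ioc 0 b, ‖g u‖ ≤ C)
    (hgL : Tendsto g (𝓝[>] 0) (𝓝 L)) :
    Tendsto (fun t => t ^ α * ∫ u in (0 : ℝ)..b, exp (-(t * u)) * (u ^ (α - 1) * g u)) atTop
      (𝓝 (Gamma α * L)) := by
  set G : ℝ → ℝ → ℝ := fun t =>
    (Iic (t * b)).indicator fun s => exp (-s) * s ^ (α - 1) * g (s / t)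
  have hscale : ∀ᶠ t in atTop, ∫ s in Ioi 0, G t s
      = t ^ α * ∫ u in (0 : ℝ)..b, exp (-(t * u)) * (u ^ (α - 1) * g u) := by
    filter_upwards [eventually_gt_atTop 0] with t ht
    rw [rpow_mul_integral_exp_neg_mul_rpow_mul_eq g hb.le ht,
      setIntegral_indicator measurableSet_Iic, Ioi_inter_Iic,
      intervalIntegral.integral_of_le (by positivity)]
  have hC : 0 ≤ C := (norm_nonneg _).trans (hgC b ⟨hb, le_rfl⟩)
  have hlim : Tendsto (fun t => ∫ s in Ioi 0, G t s) atTop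
      (𝓝 (∫ s in Ioi 0, exp (-s) * s ^ (α - 1) * L)) := by
    refine tendsto_integral_filter_of_dominated_convergence
      (fun s => C * (exp (-s) * s ^ (α - 1))) (Eventually.of_forall fun t => ?_) ?_
      ((GammaIntegral_convergent hα).const_mul C) ?_
    · exact ((by fun_prop : Measurable fun s => exp (-s) * s ^ (α - 1) * g (s / t)).indicator
        measurableSet_Iic).aestronglyMeasurable
    · filter_upwards [eventually_gt_atTop 0] with t ht
      filter_upwards [ae_restrict_mem measurableSet_Ioi] with s (hs : 0 < s)
      by_cases hsb : s ≤ t * b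
      · have hgs := hgC (s / t) ⟨div_pos hs ht, (div_le_iff₀' ht).2 hsb⟩
        simp only [G, indicator_of_mem (show s ∈ Iic (t * b) from hsb), norm_mul,
          Real.norm_of_nonneg (exp_pos _).le, Real.norm_of_nonneg (rpow_nonneg hs.le _)]
        rw [mul_comm C]
        exact mul_le_mul_of_nonneg_left hgs (by positivity)
      · simp only [G, indicator_of_notMem (show s ∉ Iic (t * b) from hsb), norm_zero]
        positivity
    · filter_upwards [ae_restrict_mem measurableSet_Ioi] with s (hs : 0 < s)
      have hst : Tendsto (fun t => s / t) atTop (𝓝[>] 0) :=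
        tendsto_nhdsWithin_iff.2 ⟨tendsto_const_nhds.div_atTop tendsto_id,
          (eventually_gt_atTop 0).mono fun t ht => div_pos hs ht⟩
      refine ((hgL.comp hst).const_mul (exp (-s) * s ^ (α - 1))).congr' ?_
      filter_upwards [eventually_ge_atTop (s / b)] with t ht
      exact (indicator_of_mem (show s ∈ Iic (t * b) from (div_le_iff₀ hb).1 ht)
        (fun s => exp (-s) * s ^ (α - 1) * g (s / t))).symm
  rw [integral_mul_const, ← Gamma_eq_integral hα] at hlim
  exact hlim.congr' hscale

lemma tendsto_rpow_mul_integral_exp_neg_mul_of_pos {f : ℝ → ℝ} {a b p : ℝ} (ha : 0 < a)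
    (hab : a ≤ b) (hf : IntervalIntegrable f volume a b) :
    Tendsto (fun t => t ^ p * ∫ u in a..b, exp (-(t * u)) * f u) atTop (𝓝 0) := by
  have hdecay := (tendsto_rpow_mul_exp_neg_mul_atTop_nhds_zero p a ha).mul_const
    (∫ u in a..b, ‖f u‖)
  rw [zero_mul] at hdecay
  refine squeeze_zero_norm' ?_ hdecay
  filter_upwards [eventually_ge_atTop 0] with t ht
  rw [norm_mul, Real.norm_of_nonneg (rpow_nonneg ht _), mul_assoc,
    ← intervalIntegral.integral_const_mul]
  gcongr
  refine intervalIntegral.norm_integral_le_of_norm_le hab (ae_of_all _ fun u hu => ?_)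
    (hf.norm.const_mul _)
  rw [norm_mul, Real.norm_of_nonneg (exp_pos _).le]
  gcongr
  nlinarith [hu.1]

lemma Real.Gamma_three_div_two : Gamma (3 / 2) = √π / 2 := by
  have := Real.Gamma_nat_add_one_add_half 0
  norm_num at this
  convert this using 2

noncomputable def catalanWeight (x : ℝ) : ℝ := √(x * (4 - x)) / x

lemma catalanWeight_nonneg (x : ℝ) (hx : 0 ≤ x) : 0 ≤ catalanWeight x :=
  div_nonneg (sqrt_nonneg _) hx

lemma hasDerivAt_sqrt_mul_four_sub {x : ℝ} (hx : x ∈ Ioo (0 : ℝ) 4) :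
    HasDerivAt (fun x => √(x * (4 - x))) ((2 - x) / √(x * (4 - x))) x := by
  have hpos : 0 < x * (4 - x) := mul_pos hx.1 (by linarith [hx.2])
  have hS := sqrt_pos.2 hpos
  refine (((hasDerivAt_id' x).fun_mul ((hasDerivAt_id' x).const_sub 4)).sqrt
    hpos.ne').congr_deriv ?_
  field_simp
  ring

lemma hasDerivAt_catalanWeight_primitive {x : ℝ} (hx : x ∈ Ioo (0 : ℝ) 4) :
    HasDerivAt (fun x => √(x * (4 - x)) + 2 * arcsin (x / 2 - 1)) (catalanWeight x) x := by
  obtain ⟨hx0, hx4⟩ := hx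
  have hpos : 0 < x * (4 - x) := mul_pos hx0 (by linarith)
  have hS := sqrt_pos.2 hpos
  have harcsin : HasDerivAt (fun x => arcsin (x / 2 - 1)) (1 / √(x * (4 - x))) x := by
    refine ((hasDerivAt_arcsin (by linarith) (by linarith)).comp x
      (((hasDerivAt_id' x).div_const 2).sub_const 1)).congr_deriv ?_
    have hsq : 1 - (x / 2 - 1) ^ 2 = x * (4 - x) / 2 ^ 2 := by ring
    rw [hsq, sqrt_div' _ (by positivity), sqrt_sq zero_le_two]
    field_simp
  refine ((hasDerivAt_sqrt_mul_four_sub ⟨hx0, hx4⟩).add (harcsin.const_mul 2)).congr_deriv ?_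
  have hS2 := sq_sqrt hpos.le
  unfold catalanWeight
  field_simp
  linear_combination -hS2

lemma continuous_catalanWeight_primitive :
    Continuous (fun x => √(x * (4 - x)) + 2 * arcsin (x / 2 - 1)) := by
  fun_prop

lemma intervalIntegrable_catalanWeight : IntervalIntegrable catalanWeight volume 0 4 := by
  refine intervalIntegral.intervalIntegrable_deriv_of_nonneg
    continuous_catalanWeight_primitive.continuousOn (fun x hx => ?_) (fun x hx => ?_)
  · simp only [zero_le_four, min_eq_left, max_eq_right] at hx
    exact hasDerivAt_catalanWeight_primitive hx
  · exact catalanWeight_nonneg x (le_of_lt (by simpa using hx.1))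

lemma integral_catalanWeight : ∫ x in (0 : ℝ)..4, catalanWeight x = 2 * π := by
  rw [intervalIntegral.integral_eq_sub_of_hasDerivAt_of_le zero_le_four
    continuous_catalanWeight_primitive.continuousOn
    (fun x hx => hasDerivAt_catalanWeight_primitive hx) intervalIntegrable_catalanWeight]
  norm_num
  ring

lemma hasDerivAt_pow_mul_four_sub_mul_sqrt (n : ℕ) {x : ℝ} (hx : x ∈ Ioo (0 : ℝ) 4) :
    HasDerivAt (fun x => x ^ n * (4 - x) * √(x * (4 - x)))
      ((4 * n + 2) * (x ^ n * catalanWeight x) - (n + 2) * (x ^ (n + 1) * catalanWeight x)) x := by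
  obtain ⟨hx0, hx4⟩ := hx
  have hpos : 0 < x * (4 - x) := mul_pos hx0 (by linarith)
  have hS := sqrt_pos.2 hpos
  have hS2 := sq_sqrt hpos.le
  have hpow : (n : ℝ) * x ^ (n - 1) = n * x ^ n / x := by
    rcases n with _ | n
    · simp
    · field_simp
      simp [pow_succ]
  refine (((hasDerivAt_pow n x).fun_mul ((hasDerivAt_id' x).const_sub 4)).fun_mul
    (hasDerivAt_sqrt_mul_four_sub ⟨hx0, hx4⟩)).congr_deriv ?_
  rw [hpow]
  unfold catalanWeight
  field_simp
  linear_combination (x ^ n * (x - 2)) * hS2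

lemma intervalIntegrable_pow_mul_catalanWeight (n : ℕ) :
    IntervalIntegrable (fun x => x ^ n * catalanWeight x) volume 0 4 :=
  intervalIntegrable_catalanWeight.continuousOn_mul (continuous_pow n).continuousOn

lemma add_two_mul_integral_pow_succ_mul_catalanWeight (n : ℕ) :
    (n + 2) * ∫ x in (0 : ℝ)..4, x ^ (n + 1) * catalanWeight x
      = (4 * n + 2) * ∫ x in (0 : ℝ)..4, x ^ n * catalanWeight x := by
  have hint := intervalIntegrable_pow_mul_catalanWeight
  have hFTC := intervalIntegral.integral_eq_sub_of_hasDerivAt_of_le zero_le_four (by fun_prop)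
    (fun x hx => hasDerivAt_pow_mul_four_sub_mul_sqrt n hx)
    (((hint n).const_mul _).sub ((hint (n + 1)).const_mul _))
  rw [intervalIntegral.integral_sub ((hint n).const_mul _) ((hint (n + 1)).const_mul _),
    intervalIntegral.integral_const_mul, intervalIntegral.integral_const_mul] at hFTC
  norm_num at hFTC
  linarith

lemma add_two_mul_catalan_succ (n : ℕ) : (n + 2) * catalan (n + 1) = (4 * n + 2) * catalan n := by
  have h := Nat.succ_mul_centralBinom_succ n
  rw [← succ_mul_catalan_eq_centralBinom, ← succ_mul_catalan_eq_centralBinom] at h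
  refine Nat.eq_of_mul_eq_mul_left n.succ_pos ?_
  linarith

lemma integral_pow_mul_catalanWeight (n : ℕ) :
    ∫ x in (0 : ℝ)..4, x ^ n * catalanWeight x = 2 * π * catalan n := by
  induction n with
  | zero => simpa using integral_catalanWeight
  | succ n ih =>
    refine mul_left_cancel₀ (by positivity : (n : ℝ) + 2 ≠ 0) ?_
    rw [add_two_mul_integral_pow_succ_mul_catalanWeight, ih]
    have := congrArg (fun k : ℕ => (k : ℝ)) (add_two_mul_catalan_succ n)
    push_cast at this
    linear_combination (2 * π) * this.symm

lemma catalan_le_four_pow (n : ℕ) : catalan n ≤ 4 ^ n :=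
  calc catalan n ≤ (n + 1) * catalan n := Nat.le_mul_of_pos_left _ n.succ_pos
    _ = n.centralBinom := succ_mul_catalan_eq_centralBinom n
    _ ≤ 4 ^ n := Nat.centralBinom_le_four_pow n

lemma summable_catalan_mul_pow_div_factorial (t : ℝ) :
    Summable (fun n : ℕ => (catalan n : ℝ) * t ^ n / n !) := by
  refine Summable.of_norm_bounded (Real.summable_pow_div_factorial (4 * |t|)) fun n => ?_
  rw [Real.norm_eq_abs, abs_div, abs_mul, abs_pow, Nat.abs_cast, Nat.abs_cast, mul_pow]
  gcongr
  exact_mod_cast catalan_le_four_pow n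

lemma integral_exp_mul_catalanWeight (t : ℝ) :
    ∫ x in (0 : ℝ)..4, exp (t * x) * catalanWeight x = 2 * π * catalanEGF t := by
  set F : ℕ → ℝ → ℝ := fun n x => t ^ n / n ! * (x ^ n * catalanWeight x)
  have hmoment (n : ℕ) (c : ℝ) :
      ∫ x in Ioc (0 : ℝ) 4, c * (x ^ n * catalanWeight x) = c * (2 * π * catalan n) := by
    rw [integral_const_mul, ← intervalIntegral.integral_of_le zero_le_four,
      integral_pow_mul_catalanWeight]
  have hint (n : ℕ) : Integrable (F n) (volume.restrict (Ioc 0 4)) :=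
    (intervalIntegrable_pow_mul_catalanWeight n).1.const_mul _
  have hnorm (n : ℕ) :
      ∫ x in Ioc (0 : ℝ) 4, ‖F n x‖ = 2 * π * ((catalan n : ℝ) * |t| ^ n / n !) := by
    have hF (x : ℝ) (hx : x ∈ Ioc (0 : ℝ) 4) :
        ‖F n x‖ = |t| ^ n / n ! * (x ^ n * catalanWeight x) := by
      simp only [F, norm_mul, norm_div, norm_pow, Real.norm_eq_abs, Nat.abs_cast,
        abs_of_nonneg hx.1.le, abs_of_nonneg (catalanWeight_nonneg x hx.1.le)]
    rw [setIntegral_congr_fun measurableSet_Ioc hF, hmoment]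
    ring
  have hsum := hasSum_integral_of_summable_integral_norm hint
    (by simpa only [hnorm] using (summable_catalan_mul_pow_div_factorial |t|).mul_left (2 * π))
  have hseries (x : ℝ) : ∑' n, F n x = exp (t * x) * catalanWeight x := by
    rw [Real.exp_eq_exp_ℝ, ← ((NormedSpace.expSeries_div_hasSum_exp (t * x)).mul_right
      (catalanWeight x)).tsum_eq]
    simp only [F, mul_pow]
    congr 1 with n
    ring
  simp only [hseries, F, hmoment, ← intervalIntegral.integral_of_le zero_le_four] at hsum
  rw [← hsum.tsum_eq, catalanEGF, ← tsum_mul_left]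
  congr 1 with n
  ring

lemma catalanEGF_eq_exp_mul_integral (t : ℝ) :
    catalanEGF t
      = exp (4 * t) * (∫ u in (0 : ℝ)..4, exp (-(t * u)) * catalanWeight (4 - u)) / (2 * π) := by
  have hreflect := intervalIntegral.integral_comp_sub_left
    (fun x => exp (t * x) * catalanWeight x) (a := 0) (b := 4) 4
  simp only [sub_zero, sub_self, integral_exp_mul_catalanWeight] at hreflect
  rw [← intervalIntegral.integral_const_mul, eq_div_iff (by positivity), mul_comm, ← hreflect]
  refine intervalIntegral.integral_congr fun u _ => ?_
  simp only [← mul_assoc, ← exp_add]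
  ring_nf

lemma catalanWeight_four_sub {u : ℝ} (hu : u ∈ Ico (0 : ℝ) 4) :
    catalanWeight (4 - u) = u ^ ((3 : ℝ) / 2 - 1) * (√(4 - u))⁻¹ := by
  have h4u : 0 < 4 - u := by linarith [hu.2]
  have := sqrt_pos.2 h4u
  rw [catalanWeight, sub_sub_cancel, sqrt_mul h4u.le, show (3 : ℝ) / 2 - 1 = 1 / 2 by norm_num,
    ← sqrt_eq_rpow]
  field_simp
  rw [sq_sqrt h4u.le]

lemma tendsto_rpow_mul_integral_exp_neg_mul_catalanWeight_four_sub :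
    Tendsto (fun t => t ^ ((3 : ℝ) / 2) *
      ∫ u in (0 : ℝ)..4, exp (-(t * u)) * catalanWeight (4 - u)) atTop (𝓝 (√π / 4)) := by
  have hw : IntervalIntegrable (fun u => catalanWeight (4 - u)) volume 0 4 := by
    simpa using (intervalIntegrable_catalanWeight.comp_sub_left 4).symm
  have hexpw (t : ℝ) : IntervalIntegrable (fun u => exp (-(t * u)) * catalanWeight (4 - u))
      volume 0 4 := hw.continuousOn_mul (by fun_prop)
  have h2 : (2 : ℝ) ∈ uIcc 0 4 := by norm_num
  have hbound (u : ℝ) (hu : u ∈ Ioc (0 : ℝ) 2) : ‖(√(4 - u))⁻¹‖ ≤ (√2)⁻¹ := by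
    have h4u : (2 : ℝ) ≤ 4 - u := by linarith [hu.2]
    rw [norm_inv, Real.norm_of_nonneg (sqrt_nonneg _)]
    gcongr
  have hlim : Tendsto (fun u : ℝ => (√(4 - u))⁻¹) (𝓝[>] 0) (𝓝 (1 / 2)) := by
    have hcont : ContinuousAt (fun u : ℝ => (√(4 - u))⁻¹) 0 :=
      ((continuous_sqrt.comp (continuous_const.sub continuous_id)).continuousAt).inv₀ (by simp)
    have h4 : √(4 : ℝ) = 2 := by norm_num
    simpa [h4] using hcont.tendsto.mono_left nhdsWithin_le_nhds
  have hhead := tendsto_rpow_mul_integral_exp_neg_mul_rpow_mul (α := 3 / 2) (by norm_num)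
    two_pos (by fun_prop) hbound hlim
  have htail := tendsto_rpow_mul_integral_exp_neg_mul_of_pos (p := 3 / 2) two_pos
    (by norm_num : (2 : ℝ) ≤ 4) (hw.mono_set (uIcc_subset_uIcc_right h2))
  rw [Real.Gamma_three_div_two, show √π / 2 * (1 / 2) = √π / 4 by ring] at hhead
  refine (add_zero (√π / 4) ▸ hhead.add htail).congr fun t => ?_
  rw [← mul_add, ← intervalIntegral.integral_add_adjacent_intervals
    ((hexpw t).mono_set (uIcc_subset_uIcc_left h2))
    ((hexpw t).mono_set (uIcc_subset_uIcc_right h2))]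
  congr 2
  refine intervalIntegral.integral_congr fun u hu => ?_
  rw [uIcc_of_le zero_le_two] at hu
  simp only [catalanWeight_four_sub ⟨hu.1, by linarith [hu.2]⟩]

/-- For the exponential generating function f of the Catalan numbers,
f(t)·8·√(π t³)·e^{−4t} tends to 1 as t → +∞; i.e. f(t) ∼ e^{4t}/(8√(π t³)). -/
theorem catalan_egf_asymptotic_atTop :
    Filter.Tendsto
      (fun t : ℝ => catalanEGF t * 8 * Real.sqrt (Real.pi * t ^ 3) * Real.exp (-(4 * t)))
      Filter.atTop (nhds 1) := by
  have hlim := tendsto_rpow_mul_integral_exp_neg_mul_catalanWeight_four_sub.const_mul (4 / √π)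
  rw [show 4 / √π * (√π / 4) = 1 by field_simp] at hlim
  refine hlim.congr' ?_
  filter_upwards [eventually_gt_atTop 0] with t ht
  have hsqrt : √(π * t ^ 3) = √π * t ^ ((3 : ℝ) / 2) := by
    rw [sqrt_mul pi_pos.le, sqrt_eq_rpow (t ^ 3), ← rpow_natCast, ← rpow_mul ht.le]
    norm_num
  rw [catalanEGF_eq_exp_mul_integral, hsqrt, exp_neg]
  field_simp
  rw [sq_sqrt pi_pos.le]
  ring
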